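/- Let ξ(0), ξ(−1), ξ(−2), ... be i.i.d. nonnegative integer random variables with ℙ(ξ > m) = (1−p_1)⋯(1−p_m), and define ν = inf{n ≥ 1 : ξ(0) ≤ n, ξ(−1) ≤ n−1, ..., ξ(−(n−1)) ≤ 1}. If 𝔼[ξ^r] < ∞ for some r ≥ 1, then 𝔼[ν^r] < ∞. -/

import Mathlib

open MeasureTheory ProbabilityTheory Filter

/-- Configuration: edge indicators. -/
abbrev Cfg := ℤ → ℤ → Bool

/-- There is an edge from `i` to `j`. -/
def Edge (ω : Cfg) (i j : ℤ) : Prop := i < j ∧ ω i j = true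

/-- There is a directed path from `i` to `j`. -/
def Leads (ω : Cfg) : ℤ → ℤ → Prop := Relation.TransGen (Edge ω)

/-- A list of vertices forming a path inside `{a,...,b}`. -/
def IsPathIn (ω : Cfg) (a b : ℤ) (l : List ℤ) : Prop :=
  l ≠ [] ∧ l.Chain' (Edge ω) ∧ ∀ x ∈ l, a ≤ x ∧ x ≤ b

/-- `L ω a b`: maximal number of edges of a path contained in `{a,...,b}`. -/
noncomputable def L (ω : Cfg) (a b : ℤ) : ℕ :=
  sSup {n | ∃ l : List ℤ, IsPathIn ω a b l ∧ l.length = n + 1}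

/-- `T ω i j`: maximal number of edges of a path from `i` to `j` (0 if none). -/
noncomputable def T (ω : Cfg) (i j : ℤ) : ℕ :=
  sSup {n | ∃ l : List ℤ, l.Chain' (Edge ω) ∧ l.head? = some i ∧
    l.getLast? = some j ∧ l.length = n + 1}

/-- The skeleton of the graph. -/
def Skel (ω : Cfg) : Set ℤ :=
  {n | (∀ j, n < j → Leads ω n j) ∧ (∀ j, j < n → Leads ω j n)}

/-- The model hypotheses: independent edges, edge `(i,j)` present w.p. `p (j-i)`. -/
def GraphModel (p : ℕ → ℝ) (μ : Measure Cfg) : Prop :=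
  IsProbabilityMeasure μ ∧
  iIndepFun (β := fun _ : ℤ × ℤ => Bool)
    (fun (e : ℤ × ℤ) (ω : Cfg) => ω e.1 e.2) μ ∧
  (∀ i j : ℤ, i < j → μ {ω | ω i j = true} = ENNReal.ofReal (p (j - i).toNat)) ∧
  (∀ i j : ℤ, j ≤ i → μ {ω | ω i j = true} = 0)

/-- `ν = inf{n ≥ 1 : ξ(0) ≤ n, ξ(−1) ≤ n−1, ..., ξ(−(n−1)) ≤ 1}`, as an
`ℝ≥0∞`-valued random variable (`⊤` if no such `n` exists). -/
noncomputable def nuOf {Ω : Type*} (ξ : ℕ → Ω → ℕ) (ω : Ω) : ENNReal :=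
  sInf {x : ENNReal | ∃ n : ℕ, x = n ∧ 1 ≤ n ∧ ∀ k : ℕ, k < n → ξ k ω ≤ n - k}

/-!
Let `z_n = ℙ(ξ(−k) ≤ n − k for all k < n) = ∏_{m ≤ n} ℙ(ξ ≤ m)`. Splitting this event according to
the value `m` of `ν` and using independence gives the renewal equation
`z_n = ∑_{m ≤ n} ℙ(ν = m) z_{n−m}`, which turns into `v_n = ∑_{t=1}^n b_t v_{n−t}` for the tails
`v_n = ℙ(ν > n)`, with `b_t = z_{t−1} − z_t ≤ ℙ(ξ > t)`. As `∑ ℙ(ξ > t) < ∞` and `p_1 > 0`, the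
`z_n` stay above some `c > 0`, so `b` is a defective distribution (`∑ b_t ≤ 1 − c`) whose moment of
order `r − 1` is at most `𝔼 ξ^r`. Splitting `(t + s + 1)^ρ` into `(s + 1)^ρ` plus a term of lower
order in `s`, the defect absorbs the main term and induction on `⌈ρ⌉` bounds `∑ (n + 1)^{r−1} v_n`,
which controls `𝔼 ν^r`.
-/

namespace NuMoments

open Finset MeasureTheory ProbabilityTheory Filter Topology
open scoped ENNReal

lemma add_rpow_le_rpow_add_mul {x y ρ : ℝ} (hx : 0 ≤ x) (hy : 0 ≤ y) (hρ : 1 ≤ ρ) :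
    (x + y) ^ ρ ≤ x ^ ρ + ρ * y * (x + y) ^ (ρ - 1) := by
  rcases (add_nonneg hx hy).eq_or_lt with h0 | hpos
  · obtain ⟨rfl, rfl⟩ : x = 0 ∧ y = 0 := ⟨by linarith, by linarith⟩
    simp
  -- Bernoulli's inequality for `x / (x + y) = 1 + s` with `s = -y / (x + y)`
  have hs : -1 ≤ -y / (x + y) := by rw [neg_div, neg_le_neg_iff, div_le_one hpos]; linarith
  have hB := one_add_mul_self_le_rpow_one_add hs hρ
  rw [show 1 + -y / (x + y) = x / (x + y) by field_simp; ring,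
    Real.div_rpow hx hpos.le, le_div_iff₀ (Real.rpow_pos_of_pos hpos _)] at hB
  have hy' : y / (x + y) * (x + y) ^ ρ = y * (x + y) ^ (ρ - 1) := by
    rw [show (x + y) ^ ρ = (x + y) ^ (ρ - 1) * (x + y) by
      rw [← Real.rpow_add_one hpos.ne']; ring_nf]
    field_simp
  have : (1 + ρ * (-y / (x + y))) * (x + y) ^ ρ = (x + y) ^ ρ - ρ * (y * (x + y) ^ (ρ - 1)) := by
    rw [← hy']; ring
  linarith

lemma natCast_add_add_one_rpow_le {ρ : ℝ} (hρ : 0 ≤ ρ) (t s : ℕ) :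
    (((t + s : ℕ) : ℝ) + 1) ^ ρ
      ≤ ((s : ℝ) + 1) ^ ρ + (ρ + 1) * ((t : ℝ) + 1) ^ ρ * ((s : ℝ) + 1) ^ max (ρ - 1) 0 := by
  have hcast : (((t + s : ℕ) : ℝ) + 1) = ((s : ℝ) + 1) + t := by push_cast; ring
  have ht : (t : ℝ) ^ ρ ≤ ((t : ℝ) + 1) ^ ρ := by gcongr; linarith
  rw [hcast]
  rcases le_total ρ 1 with hρ1 | hρ1
  · rw [max_eq_right (by linarith), Real.rpow_zero, mul_one]
    have := Real.rpow_add_le_add_rpow (by positivity : (0 : ℝ) ≤ s + 1) t.cast_nonneg hρ hρ1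
    nlinarith [Real.rpow_nonneg (by positivity : (0 : ℝ) ≤ t + 1) ρ]
  rw [max_eq_left (by linarith)]
  refine (add_rpow_le_rpow_add_mul (by positivity) t.cast_nonneg hρ1).trans ?_
  gcongr ((s : ℝ) + 1) ^ ρ + ?_
  calc ρ * t * (((s : ℝ) + 1) + t) ^ (ρ - 1)
      ≤ (ρ + 1) * ((t : ℝ) + 1) * (((t : ℝ) + 1) * ((s : ℝ) + 1)) ^ (ρ - 1) := by
        gcongr
        · linarith
        · linarith
        · nlinarith [(t.cast_nonneg : (0 : ℝ) ≤ t), (s.cast_nonneg : (0 : ℝ) ≤ s)]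
    _ = (ρ + 1) * ((t : ℝ) + 1) ^ ρ * ((s : ℝ) + 1) ^ (ρ - 1) := by
        rw [Real.mul_rpow (by positivity) (by positivity), mul_comm (ρ + 1),
          show ((t : ℝ) + 1) ^ ρ = ((t : ℝ) + 1) ^ (ρ - 1) * ((t : ℝ) + 1) by
            rw [← Real.rpow_add_one (by positivity)]; ring_nf]
        ring

lemma sum_filter_lt_rpow_le {r : ℝ} (hr : 1 ≤ r) (N K : ℕ) :
    ∑ t ∈ range N with t < K, ((t : ℝ) + 1) ^ (r - 1) ≤ (K : ℝ) ^ r := by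
  calc ∑ t ∈ range N with t < K, ((t : ℝ) + 1) ^ (r - 1)
      ≤ ∑ t ∈ range K, (K : ℝ) ^ (r - 1) := by
        refine (sum_le_sum fun t ht => ?_).trans (sum_le_sum_of_subset_of_nonneg
          (fun t ht => mem_range.2 (mem_filter.1 ht).2) fun _ _ _ => by positivity)
        exact Real.rpow_le_rpow (by positivity) (by exact_mod_cast (mem_filter.1 ht).2)
          (by linarith)
    _ = (K : ℝ) ^ r := by
        rcases K.eq_zero_or_pos with rfl | hK
        · simp [Real.zero_rpow (by linarith : r ≠ 0)]
        · rw [sum_const, card_range, nsmul_eq_mul, Real.rpow_sub_one (by positivity),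
            mul_div_cancel₀ _ (by positivity)]

lemma sum_Icc_sub_pred (f : ℕ → ℝ) (n : ℕ) : ∑ t ∈ Icc 1 n, (f (t - 1) - f t) = f 0 - f n := by
  induction n with
  | zero => simp
  | succ n ih => rw [sum_Icc_succ_top (by omega), ih, Nat.add_sub_cancel]; ring

lemma sum_Icc_sum_Icc_sub_comm (n : ℕ) (f : ℕ → ℕ → ℝ) :
    ∑ t ∈ Icc 1 n, ∑ m ∈ Icc 1 (n - t), f t m = ∑ m ∈ Icc 1 n, ∑ t ∈ Icc 1 (n - m), f t m :=
  sum_comm' fun t m => by simp only [mem_Icc]; omega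

lemma sum_Icc_sum_Icc_eq_sum_sum_range (N : ℕ) (f : ℕ → ℕ → ℝ) :
    ∑ n ∈ Icc 1 N, ∑ t ∈ Icc 1 n, f t (n - t) = ∑ t ∈ Icc 1 N, ∑ s ∈ range (N + 1 - t), f t s := by
  rw [sum_comm' (t' := Icc 1 N) (s' := fun t => Ico t (N + 1)) fun n t => by
    simp only [mem_Icc, mem_Ico]; omega]
  refine sum_congr rfl fun t _ => ?_
  rw [sum_Ico_eq_sum_range]
  simp only [Nat.add_sub_cancel_left]

/-- If `z = δ₀ + a ∗ z`, then `v = 1 - ∑ a` satisfies `v = δ₀ + b ∗ v` with `b t = z (t-1) - z t`;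
in generating functions, `1 - B = (1 - s) Z` and `(1 - B) V = Z (1 - A) = 1`. -/
lemma renewal_one_sub_sum {z a v : ℕ → ℝ} (hz0 : z 0 = 1)
    (hz : ∀ n, 1 ≤ n → z n = ∑ m ∈ Icc 1 n, a m * z (n - m))
    (hv : ∀ n, v n = 1 - ∑ m ∈ Icc 1 n, a m) (n : ℕ) (hn : 1 ≤ n) :
    v n = ∑ t ∈ Icc 1 n, (z (t - 1) - z t) * v (n - t) := by
  have hswap : ∑ t ∈ Icc 1 n, ∑ m ∈ Icc 1 (n - t), (z (t - 1) - z t) * a m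
      = ∑ m ∈ Icc 1 n, a m * (1 - z (n - m)) := by
    rw [sum_Icc_sum_Icc_sub_comm]
    refine sum_congr rfl fun m _ => ?_
    rw [← sum_mul, sum_Icc_sub_pred, hz0, mul_comm]
  calc v n = (1 - z n) - ∑ m ∈ Icc 1 n, a m * (1 - z (n - m)) := by
        simp only [mul_sub, mul_one, sum_sub_distrib, ← hz n hn, hv]; ring
    _ = ∑ t ∈ Icc 1 n, (z (t - 1) - z t) * v (n - t) := by
        rw [eq_comm, sum_congr rfl fun t _ => by rw [hv, mul_sub, mul_one, mul_sum],
          sum_sub_distrib, sum_Icc_sub_pred, hz0, hswap]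

section RenewalMoments

variable {v b : ℕ → ℝ} {c : ℝ}

/-- The defect `c` absorbs the main term of the weight inequality, and its error term is paid by
the `u`-weighted sums. -/
lemma sum_Icc_mul_le_of_weight (hv : ∀ n, 0 ≤ v n) (hb : ∀ t, 0 ≤ b t)
    (hrec : ∀ n, 1 ≤ n → v n = ∑ t ∈ Icc 1 n, b t * v (n - t))
    (hbsum : ∀ N, ∑ t ∈ Icc 1 N, b t ≤ 1 - c)
    {w g u : ℕ → ℝ} {M C : ℝ} (hw : ∀ n, 0 ≤ w n) (hg : ∀ t, 0 ≤ g t)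
    (hwgu : ∀ t s, w (t + s) ≤ w s + g t * u s) (hgb : ∀ N, ∑ t ∈ Icc 1 N, g t * b t ≤ M)
    (huv : ∀ N, ∑ s ∈ range N, u s * v s ≤ C) (N : ℕ) :
    ∑ n ∈ Icc 1 N, w n * v n ≤ (1 - c) * ∑ n ∈ range (N + 1), w n * v n + M * C := by
  have hC : 0 ≤ C := by simpa using huv 0
  set S := ∑ n ∈ range (N + 1), w n * v n
  have hterm : ∀ t ∈ Icc 1 N, ∑ s ∈ range (N + 1 - t), w (t + s) * (b t * v s)
      ≤ b t * S + g t * b t * C := by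
    intro t _
    calc ∑ s ∈ range (N + 1 - t), w (t + s) * (b t * v s)
        ≤ ∑ s ∈ range (N + 1 - t), (w s + g t * u s) * (b t * v s) :=
          sum_le_sum fun s _ => mul_le_mul_of_nonneg_right (hwgu t s) (mul_nonneg (hb t) (hv s))
      _ = b t * ∑ s ∈ range (N + 1 - t), w s * v s
          + g t * b t * ∑ s ∈ range (N + 1 - t), u s * v s := by
          simp only [mul_sum, ← sum_add_distrib]; exact sum_congr rfl fun s _ => by ring
      _ ≤ b t * S + g t * b t * C := by
          refine add_le_add (mul_le_mul_of_nonneg_left ?_ (hb t))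
            (mul_le_mul_of_nonneg_left (huv _) (mul_nonneg (hg t) (hb t)))
          exact sum_le_sum_of_subset_of_nonneg (range_subset_range.2 (by omega))
            fun n _ _ => mul_nonneg (hw n) (hv n)
  calc ∑ n ∈ Icc 1 N, w n * v n
      = ∑ t ∈ Icc 1 N, ∑ s ∈ range (N + 1 - t), w (t + s) * (b t * v s) := by
        rw [← sum_Icc_sum_Icc_eq_sum_sum_range]
        refine sum_congr rfl fun n hn => ?_
        rw [hrec n (mem_Icc.1 hn).1, mul_sum]
        exact sum_congr rfl fun t ht => by rw [Nat.add_sub_cancel' (mem_Icc.1 ht).2]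
    _ ≤ ∑ t ∈ Icc 1 N, (b t * S + g t * b t * C) := sum_le_sum hterm
    _ = (∑ t ∈ Icc 1 N, b t) * S + (∑ t ∈ Icc 1 N, g t * b t) * C := by
        rw [sum_add_distrib, sum_mul, sum_mul]
    _ ≤ (1 - c) * S + M * C := by
        gcongr
        · exact sum_nonneg fun n _ => mul_nonneg (hw n) (hv n)
        · exact hbsum N
        · exact hgb N

lemma sum_range_mul_le_of_weight (hv0 : v 0 = 1) (hv : ∀ n, 0 ≤ v n) (hb : ∀ t, 0 ≤ b t)
    (hrec : ∀ n, 1 ≤ n → v n = ∑ t ∈ Icc 1 n, b t * v (n - t)) (hc : 0 < c)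
    (hbsum : ∀ N, ∑ t ∈ Icc 1 N, b t ≤ 1 - c)
    {w g u : ℕ → ℝ} {M C : ℝ} (hw0 : w 0 = 1) (hw : ∀ n, 0 ≤ w n) (hg : ∀ t, 0 ≤ g t)
    (hwgu : ∀ t s, w (t + s) ≤ w s + g t * u s) (hgb : ∀ N, ∑ t ∈ Icc 1 N, g t * b t ≤ M)
    (huv : ∀ N, ∑ s ∈ range N, u s * v s ≤ C) (N : ℕ) :
    ∑ n ∈ range N, w n * v n ≤ (1 + M * C) / c := by
  have hMC : 0 ≤ M * C := mul_nonneg (by simpa using hgb 0) (by simpa using huv 0)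
  rw [le_div_iff₀ hc]
  cases N with
  | zero => simpa using add_nonneg zero_le_one hMC
  | succ N =>
    have hsplit : ∑ n ∈ range (N + 1), w n * v n = 1 + ∑ n ∈ Icc 1 N, w n * v n := by
      rw [range_eq_Ico, sum_eq_sum_Ico_succ_bot (by omega), hw0, hv0, one_mul]; rfl
    have := sum_Icc_mul_le_of_weight hv hb hrec hbsum hw hg hwgu hgb huv N
    nlinarith

lemma exists_sum_range_rpow_mul_le (hv0 : v 0 = 1) (hv : ∀ n, 0 ≤ v n) (hb : ∀ t, 0 ≤ b t)
    (hrec : ∀ n, 1 ≤ n → v n = ∑ t ∈ Icc 1 n, b t * v (n - t)) (hc : 0 < c)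
    (hbsum : ∀ N, ∑ t ∈ Icc 1 N, b t ≤ 1 - c) {ρ M : ℝ} (hρ : 0 ≤ ρ)
    (hbM : ∀ N : ℕ, ∑ t ∈ Icc 1 N, ((t : ℝ) + 1) ^ ρ * b t ≤ M) :
    ∃ C, ∀ N, ∑ n ∈ range N, ((n : ℝ) + 1) ^ ρ * v n ≤ C := by
  -- induction on `⌈σ⌉₊`, lowering the exponent by one at each step
  suffices h : ∀ k : ℕ, ∀ σ : ℝ, 0 ≤ σ → σ ≤ k → σ ≤ ρ →
      ∃ C, ∀ N, ∑ n ∈ range N, ((n : ℝ) + 1) ^ σ * v n ≤ C from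
    h ⌈ρ⌉₊ ρ hρ (Nat.le_ceil ρ) le_rfl
  intro k
  induction k with
  | zero =>
    intro σ hσ hσk _
    obtain rfl : σ = 0 := le_antisymm (by exact_mod_cast hσk) hσ
    exact ⟨_, sum_range_mul_le_of_weight hv0 hv hb hrec hc hbsum (g := 0) (u := 0) (M := 0)
      (C := 0) (by simp) (by simp) (fun _ => le_rfl) (by simp) (by simp) (by simp)⟩
  | succ k ih =>
    intro σ hσ hσk hσρ
    obtain ⟨C, hC⟩ := ih (max (σ - 1) 0) (le_max_right _ _)
      (max_le (by push_cast at hσk; linarith) k.cast_nonneg) (max_le (by linarith) hρ)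
    refine ⟨_, sum_range_mul_le_of_weight hv0 hv hb hrec hc hbsum
      (g := fun t => (σ + 1) * ((t : ℝ) + 1) ^ σ) (M := (σ + 1) * M) (by simp)
      (fun n => by positivity) (fun t => by positivity) (natCast_add_add_one_rpow_le hσ)
      (fun N => ?_) hC⟩
    simp only [mul_assoc, ← mul_sum]
    gcongr
    refine (sum_le_sum fun t _ => ?_).trans (hbM N)
    gcongr
    exacts [hb t, by linarith]

end RenewalMoments

lemma exists_pos_le_prod_one_sub {f : ℕ → ℝ} {δ : ℝ} (hf0 : ∀ n, 0 ≤ f n)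
    (hf1 : ∀ n, f n ≤ 1 - δ) (hδ : 0 < δ) (hf : Summable f) :
    ∃ c > 0, ∀ N, c ≤ ∏ n ∈ range N, (1 - f n) := by
  obtain ⟨m, hm⟩ := ((tendsto_sum_nat_add f).eventually_lt_const one_half_pos).exists
  refine ⟨δ ^ m * (1 / 2), by positivity, fun N => ?_⟩
  -- the first `m` factors are at least `δ`, and the remaining ones have total defect `≤ 1/2`
  have hhead : δ ^ m ≤ ∏ n ∈ range m, (1 - f n) := by
    simpa using prod_le_prod (fun _ _ => hδ.le) (fun n _ => by linarith [hf1 n]) (s := range m)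
  have htail : 1 / 2 ≤ ∏ k ∈ range N, (1 - f (m + k)) := by
    rw [prod_one_sub_ordered]
    have hle : ∑ k ∈ range N, f (m + k) ≤ ∑' k, f (k + m) := by
      simpa only [add_comm m] using ((summable_nat_add_iff m).2 hf).sum_le_tsum _ fun k _ => hf0 _
    have : ∑ k ∈ range N, f (m + k) * ∏ j ∈ range N with j < k, (1 - f (m + j))
        ≤ ∑ k ∈ range N, f (m + k) :=
      sum_le_sum fun k _ => mul_le_of_le_one_right (hf0 _)
        (prod_le_one (fun j _ => by linarith [hf1 (m + j)]) fun j _ => by linarith [hf0 (m + j)])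
    linarith [hm.le]
  calc δ ^ m * (1 / 2) ≤ ∏ n ∈ range (m + N), (1 - f n) := by
        rw [prod_range_add]
        exact mul_le_mul hhead htail (by norm_num)
          (prod_nonneg fun n _ => by linarith [hf1 n])
    _ ≤ ∏ n ∈ range N, (1 - f n) :=
        prod_le_prod_of_subset_of_le_one (range_subset_range.2 (by omega))
          (fun n _ => by linarith [hf1 n]) fun n _ _ => by linarith [hf0 n]

/-- The tail `ℙ(ξ > m)` of the law of `ξ`. -/
def tailProb (p : ℕ → ℝ) (m : ℕ) : ℝ := ∏ j ∈ Icc 1 m, (1 - p j)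

def clearProb (p : ℕ → ℝ) (n : ℕ) : ℝ := ∏ m ∈ range n, (1 - tailProb p (m + 1))

lemma clearProb_sub_clearProb_succ (p : ℕ → ℝ) (n : ℕ) :
    clearProb p n - clearProb p (n + 1) = clearProb p n * tailProb p (n + 1) := by
  simp only [clearProb, prod_range_succ]; ring

section Sequences

variable {p : ℕ → ℝ} (hp : ∀ k, 0 ≤ p k ∧ p k < 1)
include hp

lemma tailProb_nonneg (m : ℕ) : 0 ≤ tailProb p m :=
  prod_nonneg fun j _ => by linarith [(hp j).2]

lemma tailProb_le_one (m : ℕ) : tailProb p m ≤ 1 :=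
  prod_le_one (fun j _ => by linarith [(hp j).2]) fun j _ => by linarith [(hp j).1]

lemma tailProb_le_one_sub (m : ℕ) : tailProb p (m + 1) ≤ 1 - p 1 := by
  rw [tailProb, ← mul_prod_erase _ _ (mem_Icc.2 ⟨le_rfl, by omega⟩ : 1 ∈ Icc 1 (m + 1))]
  exact mul_le_of_le_one_right (by linarith [(hp 1).2])
    (prod_le_one (fun j _ => by linarith [(hp j).2]) fun j _ => by linarith [(hp j).1])

lemma clearProb_nonneg (n : ℕ) : 0 ≤ clearProb p n :=
  prod_nonneg fun m _ => by linarith [tailProb_le_one hp (m + 1)]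

lemma clearProb_le_one (n : ℕ) : clearProb p n ≤ 1 :=
  prod_le_one (fun m _ => by linarith [tailProb_le_one hp (m + 1)])
    fun m _ => by linarith [tailProb_nonneg hp (m + 1)]

lemma clearProb_pred_sub_nonneg (t : ℕ) : 0 ≤ clearProb p (t - 1) - clearProb p t := by
  rcases t with _ | t
  · simp
  · rw [Nat.add_sub_cancel, clearProb_sub_clearProb_succ]
    exact mul_nonneg (clearProb_nonneg hp t) (tailProb_nonneg hp (t + 1))

lemma clearProb_pred_sub_le (t : ℕ) : clearProb p (t - 1) - clearProb p t ≤ tailProb p t := by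
  rcases t with _ | t
  · simpa using tailProb_nonneg hp 0
  · rw [Nat.add_sub_cancel, clearProb_sub_clearProb_succ]
    exact mul_le_of_le_one_left (tailProb_nonneg hp (t + 1)) (clearProb_le_one hp t)

lemma exists_pos_le_clearProb (hp1 : 0 < p 1) (hsum : Summable (tailProb p)) :
    ∃ c > 0, ∀ N, c ≤ clearProb p N :=
  exists_pos_le_prod_one_sub (fun n => tailProb_nonneg hp (n + 1)) (tailProb_le_one_sub hp) hp1
    ((summable_nat_add_iff 1).2 hsum)

lemma summable_tailProb {ρ M : ℝ} (hρ : 0 ≤ ρ)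
    (hM : ∀ N, ∑ t ∈ range N, ((t : ℝ) + 1) ^ ρ * tailProb p t ≤ M) : Summable (tailProb p) :=
  summable_of_sum_range_le (tailProb_nonneg hp) fun N => (sum_le_sum fun t _ =>
    le_mul_of_one_le_left (tailProb_nonneg hp t) (Real.one_le_rpow (by simp) hρ)).trans (hM N)

lemma sum_Icc_rpow_mul_clearProb_pred_sub_le {ρ M : ℝ}
    (hM : ∀ N, ∑ t ∈ range N, ((t : ℝ) + 1) ^ ρ * tailProb p t ≤ M) (N : ℕ) :
    ∑ t ∈ Icc 1 N, ((t : ℝ) + 1) ^ ρ * (clearProb p (t - 1) - clearProb p t) ≤ M := by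
  refine le_trans ?_ (hM (N + 1))
  calc ∑ t ∈ Icc 1 N, ((t : ℝ) + 1) ^ ρ * (clearProb p (t - 1) - clearProb p t)
      ≤ ∑ t ∈ Icc 1 N, ((t : ℝ) + 1) ^ ρ * tailProb p t :=
        sum_le_sum fun t _ => by gcongr; exact clearProb_pred_sub_le hp t
    _ ≤ ∑ t ∈ range (N + 1), ((t : ℝ) + 1) ^ ρ * tailProb p t :=
        sum_le_sum_of_subset_of_nonneg (fun t ht => mem_range.2 (by simp at ht; omega))
          fun t _ _ => mul_nonneg (by positivity) (tailProb_nonneg hp t)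

end Sequences

section Events

variable {Ω : Type*} (ξ : ℕ → Ω → ℕ)

/-- With `ξ k` standing for `ξ(−k)`: for the chain `x₀ = 0`, `x_{n+1} = max(x_n, ξ(−n)) − 1`,
`clearedBy ξ 0 n` is the event `x_n ≤ 0`, and `clearedBy ξ m n` is its part that involves only
`ξ(−m), …, ξ(−(n−1))`. -/
def clearedBy (m n : ℕ) : Set Ω := ⋂ k ∈ Ico m n, {ω | ξ k ω + k ≤ n}

/-- The event `ν = m`. -/
def firstCleared (m : ℕ) : Set Ω := clearedBy ξ 0 m \ ⋃ j ∈ Ico 1 m, clearedBy ξ 0 j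

variable {ξ}

lemma mem_clearedBy {m n : ℕ} {ω : Ω} : ω ∈ clearedBy ξ m n ↔ ∀ k ∈ Ico m n, ξ k ω + k ≤ n := by
  simp [clearedBy]

lemma exists_mem_firstCleared {n : ℕ} {ω : Ω} (hn : 1 ≤ n) (h : ω ∈ clearedBy ξ 0 n) :
    ∃ m ∈ Icc 1 n, ω ∈ firstCleared ξ m := by
  classical
  have hex : ∃ j, 1 ≤ j ∧ ω ∈ clearedBy ξ 0 j := ⟨n, hn, h⟩
  refine ⟨Nat.find hex, mem_Icc.2 ⟨(Nat.find_spec hex).1, Nat.find_min' hex ⟨hn, h⟩⟩,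
    (Nat.find_spec hex).2, ?_⟩
  simp only [Set.mem_iUnion, mem_Ico, not_exists]
  exact fun j hj => (not_and.1 (Nat.find_min hex hj.2)) hj.1

lemma disjoint_firstCleared {m m' : ℕ} (hm : 1 ≤ m) (h : m < m') :
    Disjoint (firstCleared ξ m) (firstCleared ξ m') :=
  Set.disjoint_left.2 fun _ hω hω' =>
    hω'.2 (Set.mem_biUnion (mem_coe.2 (mem_Ico.2 ⟨hm, h⟩)) hω.1)

lemma pairwiseDisjoint_firstCleared (s : Finset ℕ) (hs : ∀ m ∈ s, 1 ≤ m) :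
    (s : Set ℕ).PairwiseDisjoint (firstCleared ξ) := by
  intro m hm m' hm' hne
  rcases hne.lt_or_gt with h | h
  exacts [disjoint_firstCleared (hs m hm) h, (disjoint_firstCleared (hs m' hm') h).symm]

lemma clearedBy_zero_eq_biUnion {n : ℕ} (hn : 1 ≤ n) :
    clearedBy ξ 0 n = ⋃ m ∈ Icc 1 n, (firstCleared ξ m ∩ clearedBy ξ m n) := by
  ext ω
  simp only [Set.mem_iUnion, Set.mem_inter_iff, exists_prop]
  constructor
  · intro h
    obtain ⟨m, hm, hfirst⟩ := exists_mem_firstCleared hn h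
    exact ⟨m, hm, hfirst, mem_clearedBy.2 fun k hk =>
      mem_clearedBy.1 h k (mem_Ico.2 ⟨k.zero_le, (mem_Ico.1 hk).2⟩)⟩
  · rintro ⟨m, hm, hfirst, hrest⟩
    refine mem_clearedBy.2 fun k hk => ?_
    rcases lt_or_ge k m with hkm | hkm
    · have := mem_clearedBy.1 hfirst.1 k (mem_Ico.2 ⟨k.zero_le, hkm⟩)
      linarith [(mem_Icc.1 hm).2]
    · exact mem_clearedBy.1 hrest k (mem_Ico.2 ⟨hkm, (mem_Ico.1 hk).2⟩)

lemma nuOf_le_iff {n : ℕ} {ω : Ω} :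
    nuOf ξ ω ≤ n ↔ ∃ m ∈ Icc 1 n, ω ∈ clearedBy ξ 0 m := by
  have hmem : ∀ m : ℕ, 1 ≤ m → (ω ∈ clearedBy ξ 0 m ↔ ∀ k < m, ξ k ω ≤ m - k) := fun m _ => by
    simp only [mem_clearedBy, mem_Ico, zero_le, true_and]
    exact forall₂_congr fun k hk => by omega
  constructor
  · intro h
    by_contra! hnone
    have : ((n + 1 : ℕ) : ℝ≥0∞) ≤ nuOf ξ ω := by
      refine le_sInf ?_
      rintro _ ⟨m, rfl, hm1, hm⟩
      by_contra! hlt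
      have hmn : m < n + 1 := by exact_mod_cast hlt
      exact hnone m (mem_Icc.2 ⟨hm1, by omega⟩) ((hmem m hm1).2 hm)
    exact absurd (this.trans h) (by rw [not_le]; exact_mod_cast n.lt_succ_self)
  · rintro ⟨m, hm, hω⟩
    obtain ⟨hm1, hmn⟩ := mem_Icc.1 hm
    calc nuOf ξ ω ≤ m := sInf_le ⟨m, rfl, hm1, (hmem m hm1).1 hω⟩
      _ ≤ n := by exact_mod_cast hmn

lemma setOf_nuOf_le_eq_biUnion (n : ℕ) :
    {ω | nuOf ξ ω ≤ n} = ⋃ m ∈ Icc 1 n, firstCleared ξ m := by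
  ext ω
  simp only [Set.mem_ofPred_eq, nuOf_le_iff, Set.mem_iUnion, exists_prop]
  constructor
  · rintro ⟨j, hj, hω⟩
    obtain ⟨m, hm, hfirst⟩ := exists_mem_firstCleared (mem_Icc.1 hj).1 hω
    exact ⟨m, mem_Icc.2 ⟨(mem_Icc.1 hm).1, (mem_Icc.1 hm).2.trans (mem_Icc.1 hj).2⟩, hfirst⟩
  · rintro ⟨m, hm, hfirst⟩
    exact ⟨m, hm, hfirst.1⟩

section Measurability

variable {mΩ : MeasurableSpace Ω}

lemma measurableSet_clearedBy {m n : ℕ} (h : ∀ k ∈ Ico m n, Measurable (ξ k)) :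
    MeasurableSet (clearedBy ξ m n) :=
  .biInter (Set.to_countable _) fun k hk => h k hk (Set.to_countable {x | x + k ≤ n}).measurableSet

lemma measurableSet_firstCleared {m : ℕ} (h : ∀ k < m, Measurable (ξ k)) :
    MeasurableSet (firstCleared ξ m) :=
  (measurableSet_clearedBy fun k hk => h k (mem_Ico.1 hk).2).diff <|
    .biUnion (Set.to_countable _) fun _ hj =>
      measurableSet_clearedBy fun k hk => h k ((mem_Ico.1 hk).2.trans (mem_Ico.1 hj).2)

end Measurability

end Events

section Probabilities

variable {Ω : Type*} [MeasurableSpace Ω] {μ : Measure Ω} {ξ : ℕ → Ω → ℕ} {p : ℕ → ℝ}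

lemma measure_firstCleared_inter_clearedBy (hmeas : ∀ k, Measurable (ξ k))
    (hindep : iIndepFun ξ μ) (m n : ℕ) :
    μ (firstCleared ξ m ∩ clearedBy ξ m n) = μ (firstCleared ξ m) * μ (clearedBy ξ m n) := by
  -- the two events depend on the disjoint families `(ξ k)_{k < m}` and `(ξ k)_{k ≥ m}`
  have hindep' := indep_iSup_of_disjoint (fun k => (hmeas k).comap_le) hindep.iIndep
    (Set.Iio_disjoint_Ici (le_refl m))
  have hmeas' : ∀ (S : Set ℕ), ∀ k ∈ S,
      Measurable[⨆ i ∈ S, MeasurableSpace.comap (ξ i) inferInstance] (ξ k) := fun S k hk =>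
    Measurable.of_comap_le (le_iSup₂_of_le k hk le_rfl)
  exact (Indep_iff _ _ _).1 hindep' _ _
    (measurableSet_firstCleared fun k hk => hmeas' _ k hk)
    (measurableSet_clearedBy fun k hk => hmeas' _ k (mem_Ico.1 hk).1)

variable [IsProbabilityMeasure μ]

lemma measure_setOf_add_le (hmeas : ∀ k, Measurable (ξ k)) (hp : ∀ k, 0 ≤ p k ∧ p k < 1)
    (htail : ∀ k n : ℕ, μ {ω | n < ξ k ω} = ENNReal.ofReal (tailProb p n)) {k n : ℕ} (hk : k ≤ n) :
    μ {ω | ξ k ω + k ≤ n} = ENNReal.ofReal (1 - tailProb p (n - k)) := by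
  have hcompl : {ω | ξ k ω + k ≤ n} = {ω | n - k < ξ k ω}ᶜ := by ext; simp; omega
  rw [hcompl, prob_compl_eq_one_sub (measurableSet_lt measurable_const (hmeas k)), htail,
    ENNReal.ofReal_sub _ (tailProb_nonneg hp _), ENNReal.ofReal_one]

lemma measure_clearedBy (hmeas : ∀ k, Measurable (ξ k)) (hindep : iIndepFun ξ μ)
    (hp : ∀ k, 0 ≤ p k ∧ p k < 1)
    (htail : ∀ k n : ℕ, μ {ω | n < ξ k ω} = ENNReal.ofReal (tailProb p n)) (m n : ℕ) :
    μ (clearedBy ξ m n) = ENNReal.ofReal (clearProb p (n - m)) := by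
  rw [clearedBy, hindep.meas_biInter (S := Ico m n) (s := fun k => {ω | ξ k ω + k ≤ n})
      fun k _ => ⟨{x | x + k ≤ n}, trivial, rfl⟩,
    prod_congr rfl fun k hk => measure_setOf_add_le hmeas hp htail (mem_Ico.1 hk).2.le,
    ← ENNReal.ofReal_prod_of_nonneg fun k _ => by linarith [tailProb_le_one hp (n - k)]]
  congr 1
  refine prod_nbij' (fun k => n - 1 - k) (fun j => n - 1 - j) ?_ ?_ ?_ ?_ ?_ <;>
    intro k hk <;> simp only [mem_Ico, mem_range] at hk ⊢
  all_goals first | omega | congr 2; omega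

lemma clearProb_eq_sum (hmeas : ∀ k, Measurable (ξ k)) (hindep : iIndepFun ξ μ)
    (hp : ∀ k, 0 ≤ p k ∧ p k < 1)
    (htail : ∀ k n : ℕ, μ {ω | n < ξ k ω} = ENNReal.ofReal (tailProb p n)) {n : ℕ} (hn : 1 ≤ n) :
    clearProb p n = ∑ m ∈ Icc 1 n, (μ (firstCleared ξ m)).toReal * clearProb p (n - m) := by
  have hsplit := congrArg (fun s => (μ s).toReal) (clearedBy_zero_eq_biUnion (ξ := ξ) hn)
  rw [measure_biUnion_finset ((pairwiseDisjoint_firstCleared _ fun m hm => (mem_Icc.1 hm).1).mono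
      fun _ => Set.inter_subset_left)
    fun m _ => (measurableSet_firstCleared fun k _ => hmeas k).inter
      (measurableSet_clearedBy fun k _ => hmeas k),
    ENNReal.toReal_sum fun m _ => measure_ne_top μ _, measure_clearedBy hmeas hindep hp htail,
    Nat.sub_zero, ENNReal.toReal_ofReal (clearProb_nonneg hp n)] at hsplit
  rw [hsplit]
  refine sum_congr rfl fun m _ => ?_
  rw [measure_firstCleared_inter_clearedBy hmeas hindep, ENNReal.toReal_mul,
    measure_clearedBy hmeas hindep hp htail, ENNReal.toReal_ofReal (clearProb_nonneg hp _)]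

end Probabilities

noncomputable def survival {Ω : Type*} [MeasurableSpace Ω] (ξ : ℕ → Ω → ℕ) (μ : Measure Ω)
    (n : ℕ) : ℝ :=
  (μ {ω | (n : ℝ≥0∞) < nuOf ξ ω}).toReal

section Survival

variable {Ω : Type*} [MeasurableSpace Ω] {μ : Measure Ω} [IsProbabilityMeasure μ]
  {ξ : ℕ → Ω → ℕ} {p : ℕ → ℝ}

lemma measurableSet_setOf_nuOf_le (hmeas : ∀ k, Measurable (ξ k)) (n : ℕ) :
    MeasurableSet {ω | nuOf ξ ω ≤ n} := by
  rw [setOf_nuOf_le_eq_biUnion]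
  exact .biUnion (Set.to_countable _) fun m _ => measurableSet_firstCleared fun k _ => hmeas k

lemma survival_eq (hmeas : ∀ k, Measurable (ξ k)) (n : ℕ) :
    survival ξ μ n = 1 - ∑ m ∈ Icc 1 n, (μ (firstCleared ξ m)).toReal := by
  have hsum : μ {ω | nuOf ξ ω ≤ n} = ∑ m ∈ Icc 1 n, μ (firstCleared ξ m) := by
    rw [setOf_nuOf_le_eq_biUnion, measure_biUnion_finset
      (pairwiseDisjoint_firstCleared _ fun m hm => (mem_Icc.1 hm).1)
      fun m _ => measurableSet_firstCleared fun k _ => hmeas k]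
  have hcompl : {ω | (n : ℝ≥0∞) < nuOf ξ ω} = {ω | nuOf ξ ω ≤ n}ᶜ := by ext; simp
  rw [survival, hcompl, prob_compl_eq_one_sub (measurableSet_setOf_nuOf_le hmeas n), hsum,
    ENNReal.toReal_sub_of_le (hsum ▸ prob_le_one) ENNReal.one_ne_top, ENNReal.toReal_one,
    ENNReal.toReal_sum fun m _ => measure_ne_top μ _]

lemma survival_zero (hmeas : ∀ k, Measurable (ξ k)) : survival ξ μ 0 = 1 := by
  simp [survival_eq hmeas]

lemma survival_eq_sum (hmeas : ∀ k, Measurable (ξ k)) (hindep : iIndepFun ξ μ)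
    (hp : ∀ k, 0 ≤ p k ∧ p k < 1)
    (htail : ∀ k n : ℕ, μ {ω | n < ξ k ω} = ENNReal.ofReal (tailProb p n)) {n : ℕ} (hn : 1 ≤ n) :
    survival ξ μ n
      = ∑ t ∈ Icc 1 n, (clearProb p (t - 1) - clearProb p t) * survival ξ μ (n - t) :=
  renewal_one_sub_sum (by simp [clearProb]) (fun _ => clearProb_eq_sum hmeas hindep hp htail)
    (survival_eq hmeas) n hn

end Survival

section Moments

variable {Ω : Type*} [MeasurableSpace Ω] {μ : Measure Ω}

lemma sum_range_rpow_mul_measure_lt_le {X : Ω → ℕ} (hX : Measurable X) {r : ℝ} (hr : 1 ≤ r)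
    (N : ℕ) :
    ∑ t ∈ range N, ENNReal.ofReal (((t : ℝ) + 1) ^ (r - 1)) * μ {ω | t < X ω}
      ≤ ∫⁻ ω, (X ω : ℝ≥0∞) ^ r ∂μ := by
  have hmeas : ∀ t : ℕ, MeasurableSet {ω | t < X ω} := fun t => measurableSet_lt measurable_const hX
  simp_rw [← lintegral_indicator_const (hmeas _)]
  rw [← lintegral_finsetSum _ fun t _ => measurable_const.indicator (hmeas t)]
  refine lintegral_mono fun ω => ?_
  calc ∑ t ∈ range N, {ω | t < X ω}.indicator (fun _ => ENNReal.ofReal (((t : ℝ) + 1) ^ (r - 1))) ω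
      = ENNReal.ofReal (∑ t ∈ range N with t < X ω, ((t : ℝ) + 1) ^ (r - 1)) := by
        rw [ENNReal.ofReal_sum_of_nonneg fun _ _ => by positivity, sum_filter]
        exact sum_congr rfl fun t _ => by simp [Set.indicator_apply]
    _ ≤ ENNReal.ofReal ((X ω : ℝ) ^ r) := ENNReal.ofReal_le_ofReal (sum_filter_lt_rpow_le hr N _)
    _ = (X ω : ℝ≥0∞) ^ r := by
        rw [← ENNReal.ofReal_rpow_of_nonneg (by positivity) (by linarith), ENNReal.ofReal_natCast]

lemma sum_range_rpow_mul_tailProb_le {X : Ω → ℕ} {p : ℕ → ℝ} (hX : Measurable X)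
    (hp : ∀ k, 0 ≤ p k ∧ p k < 1)
    (htail : ∀ n : ℕ, μ {ω | n < X ω} = ENNReal.ofReal (tailProb p n)) {r : ℝ} (hr : 1 ≤ r)
    (hmom : ∫⁻ ω, (X ω : ℝ≥0∞) ^ r ∂μ ≠ ⊤) (N : ℕ) :
    ∑ t ∈ range N, ((t : ℝ) + 1) ^ (r - 1) * tailProb p t
      ≤ (∫⁻ ω, (X ω : ℝ≥0∞) ^ r ∂μ).toReal := by
  rw [← ENNReal.ofReal_le_iff_le_toReal hmom,
    ENNReal.ofReal_sum_of_nonneg fun t _ => mul_nonneg (by positivity) (tailProb_nonneg hp t)]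
  refine le_trans (le_of_eq (sum_congr rfl fun t _ => ?_))
    (sum_range_rpow_mul_measure_lt_le hX hr N)
  rw [htail, ENNReal.ofReal_mul (by positivity)]

lemma rpow_le_tsum_indicator {r : ℝ} (hr : 0 < r) (x : ℝ≥0∞) :
    x ^ r ≤ ∑' n : ℕ, (Set.Ioi (n : ℝ≥0∞)).indicator
      (fun _ => ENNReal.ofReal (((n : ℝ) + 1) ^ r - (n : ℝ) ^ r)) x := by
  have key : ∀ N : ℕ, (∀ n < N, (n : ℝ≥0∞) < x) → (N : ℝ≥0∞) ^ r
      ≤ ∑' n : ℕ, (Set.Ioi (n : ℝ≥0∞)).indicator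
          (fun _ => ENNReal.ofReal (((n : ℝ) + 1) ^ r - (n : ℝ) ^ r)) x := by
    intro N hN
    calc (N : ℝ≥0∞) ^ r = ∑ n ∈ range N, ENNReal.ofReal (((n : ℝ) + 1) ^ r - (n : ℝ) ^ r) := by
          rw [← ENNReal.ofReal_sum_of_nonneg fun n _ => sub_nonneg.2 (by gcongr; linarith),
            ← ENNReal.ofReal_natCast, ENNReal.ofReal_rpow_of_nonneg (by positivity) hr.le]
          have := sum_range_sub (fun n : ℕ => (n : ℝ) ^ r) N
          push_cast at this
          rw [this, Real.zero_rpow hr.ne', sub_zero]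
      _ = ∑ n ∈ range N, (Set.Ioi (n : ℝ≥0∞)).indicator
            (fun _ => ENNReal.ofReal (((n : ℝ) + 1) ^ r - (n : ℝ) ^ r)) x :=
          sum_congr rfl fun n hn =>
            (Set.indicator_of_mem (show x ∈ Set.Ioi (n : ℝ≥0∞) from hN n (mem_range.1 hn))
              fun _ => ENNReal.ofReal (((n : ℝ) + 1) ^ r - (n : ℝ) ^ r)).symm
      _ ≤ _ := ENNReal.sum_le_tsum _
  rcases eq_or_ne x ⊤ with rfl | hx
  · have hlim := ((ENNReal.continuous_rpow_const (y := r)).tendsto ⊤).comp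
      ENNReal.tendsto_nat_nhds_top
    exact le_of_tendsto' hlim fun N => key N fun n _ => ENNReal.natCast_lt_top n
  · calc x ^ r ≤ (⌈x.toReal⌉₊ : ℝ≥0∞) ^ r := by
          gcongr
          rw [← ENNReal.ofReal_natCast, ENNReal.le_ofReal_iff_toReal_le hx (by positivity)]
          exact Nat.le_ceil _
      _ ≤ _ := key _ fun n hn => by
          rw [← ENNReal.ofReal_natCast, ENNReal.ofReal_lt_iff_lt_toReal (by positivity) hx]
          exact Nat.lt_ceil.1 hn

lemma lintegral_nuOf_rpow_le [IsProbabilityMeasure μ] {ξ : ℕ → Ω → ℕ}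
    (hmeas : ∀ k, Measurable (ξ k)) {r C : ℝ} (hr : 1 ≤ r)
    (hC : ∀ N, ∑ n ∈ range N, ((n : ℝ) + 1) ^ (r - 1) * survival ξ μ n ≤ C) :
    ∫⁻ ω, nuOf ξ ω ^ r ∂μ ≤ ENNReal.ofReal (r * C) := by
  have hset : ∀ n : ℕ, MeasurableSet (nuOf ξ ⁻¹' Set.Ioi (n : ℝ≥0∞)) := fun n => by
    convert (measurableSet_setOf_nuOf_le hmeas n).compl using 1
    ext; simp
  have hterm : ∀ n : ℕ, 0 ≤ r * ((n : ℝ) + 1) ^ (r - 1) * survival ξ μ n := fun n => by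
    have : 0 ≤ survival ξ μ n := ENNReal.toReal_nonneg
    positivity
  have hsum : ∀ N, ∑ n ∈ range N, r * ((n : ℝ) + 1) ^ (r - 1) * survival ξ μ n ≤ r * C :=
    fun N => by
      simp only [mul_assoc, ← mul_sum]
      exact mul_le_mul_of_nonneg_left (hC N) (by linarith)
  calc ∫⁻ ω, nuOf ξ ω ^ r ∂μ
      ≤ ∫⁻ ω, ∑' n : ℕ, (nuOf ξ ⁻¹' Set.Ioi (n : ℝ≥0∞)).indicator
          (fun _ => ENNReal.ofReal (((n : ℝ) + 1) ^ r - (n : ℝ) ^ r)) ω ∂μ :=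
        lintegral_mono fun ω => rpow_le_tsum_indicator (by linarith) _
    _ = ∑' n : ℕ, ENNReal.ofReal (((n : ℝ) + 1) ^ r - (n : ℝ) ^ r)
          * ENNReal.ofReal (survival ξ μ n) := by
        rw [lintegral_tsum fun n => (measurable_const.indicator (hset n)).aemeasurable]
        refine tsum_congr fun n => ?_
        rw [lintegral_indicator_const (hset n), survival,
          ENNReal.ofReal_toReal (measure_ne_top μ _)]
        rfl
    _ ≤ ∑' n : ℕ, ENNReal.ofReal (r * ((n : ℝ) + 1) ^ (r - 1) * survival ξ μ n) := by
        refine ENNReal.tsum_le_tsum fun n => ?_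
        rw [← ENNReal.ofReal_mul (sub_nonneg.2 (by gcongr; linarith))]
        refine ENNReal.ofReal_le_ofReal (mul_le_mul_of_nonneg_right ?_ ENNReal.toReal_nonneg)
        have := add_rpow_le_rpow_add_mul (n.cast_nonneg : (0 : ℝ) ≤ n) zero_le_one hr
        linarith
    _ = ENNReal.ofReal (∑' n : ℕ, r * ((n : ℝ) + 1) ^ (r - 1) * survival ξ μ n) :=
        (ENNReal.ofReal_tsum_of_nonneg hterm (summable_of_sum_range_le hterm hsum)).symm
    _ ≤ ENNReal.ofReal (r * C) :=
        ENNReal.ofReal_le_ofReal (Real.tsum_le_of_sum_range_le hterm hsum)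

end Moments

end NuMoments

open NuMoments Finset in
/-- `ν` has as many moments as `ξ`. -/
theorem stmt_10 (p : ℕ → ℝ) (hp : ∀ k, 0 ≤ p k ∧ p k < 1) (hp1 : 0 < p 1)
    {Ω : Type*} [MeasurableSpace Ω] (μ : Measure Ω) [IsProbabilityMeasure μ]
    (ξ : ℕ → Ω → ℕ) (hmeas : ∀ k, Measurable (ξ k))
    (hindep : iIndepFun (β := fun _ : ℕ => ℕ) ξ μ)
    (htail : ∀ k n : ℕ, μ {ω | n < ξ k ω}
      = ENNReal.ofReal (∏ j ∈ Finset.Icc 1 n, (1 - p j)))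
    (r : ℝ) (hr : 1 ≤ r)
    (hmom : ∫⁻ ω, (ξ 0 ω : ENNReal) ^ r ∂μ < ⊤) :
    ∫⁻ ω, (nuOf ξ ω) ^ r ∂μ < ⊤ := by
  have htail' : ∀ k n : ℕ, μ {ω | n < ξ k ω} = ENNReal.ofReal (tailProb p n) := htail
  have hρ : 0 ≤ r - 1 := by linarith
  have hM := sum_range_rpow_mul_tailProb_le (hmeas 0) hp (htail' 0) hr hmom.ne
  obtain ⟨c, hc, hcN⟩ := exists_pos_le_clearProb hp hp1 (summable_tailProb hp hρ hM)
  have hbsum : ∀ N, ∑ t ∈ Icc 1 N, (clearProb p (t - 1) - clearProb p t) ≤ 1 - c := fun N => by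
    rw [sum_Icc_sub_pred (clearProb p)]
    linarith [hcN N, show clearProb p 0 = 1 by simp [clearProb]]
  obtain ⟨C, hC⟩ := exists_sum_range_rpow_mul_le (survival_zero hmeas)
    (fun n => ENNReal.toReal_nonneg) (clearProb_pred_sub_nonneg hp)
    (fun n hn => survival_eq_sum hmeas hindep hp htail' hn) hc hbsum hρ
    (sum_Icc_rpow_mul_clearProb_pred_sub_le hp hM)
  exact (lintegral_nuOf_rpow_le hmeas hr hC).trans_lt ENNReal.ofReal_lt_top
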